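/- Let D ≥ 2 and suppose the balanced coupled generalized Lyapunov equations Ā_i Λ_i + Λ_i Ā_iᵀ + Σ_{j≠i} K̄_{j,i} Λ_j K̄_{j,i}ᵀ + B̄_i B̄_iᵀ = 0 hold for all modes i, with Λ_i diagonal. Fix truncation orders r_i ≤ n_i and partition Λ_i = diag(Λ̂_i, Λ̌_i), Ā_i = [[Â_i, Ā_i^{12}],[Ā_i^{21}, Ā_i^{22}]], B̄_i = [B̂_i; B̄_i^{2}], K̄_{j,i} = [[K̂_{j,i}, K̄_{j,i}^{12}],[K̄_{j,i}^{21}, K̄_{j,i}^{22}]] with leading blocks of sizes r_i (and r_i × r_j for K̂_{j,i}). Then the truncated blocks satisfy Â_i Λ̂_i + Λ̂_i Â_iᵀ + Σ_{j≠i} K̂_{j,i} Λ̂_j K̂_{j,i}ᵀ + Σ_{j≠i} K̄_{j,i}^{12} Λ̌_j (K̄_{j,i}^{12})ᵀ + B̂_i B̂_iᵀ = 0 for every i. In particular, if each Λ̌_j is positive semidefinite, Â_i Λ̂_i + Λ̂_i Â_iᵀ + Σ_{j≠i} K̂_{j,i} Λ̂_j K̂_{j,i}ᵀ + B̂_i B̂_iᵀ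 ⪯ 0. -/

import Mathlib

open Matrix Function

/-!
Compressing the balanced equation of mode `i` to its leading `rᵢ × rᵢ` block is linear, and
compresses `Āᵢ Λᵢ + Λᵢ Āᵢᵀ` and `B̄ᵢ B̄ᵢᵀ` to their truncated counterparts because `Λᵢ` is
diagonal. The coupling term `K̄ⱼᵢ Λⱼ K̄ⱼᵢᵀ` is a sum over the index `k` of mode `j`; splitting
that index into the leading `rⱼ` and the trailing `nⱼ - rⱼ` entries splits it into the truncated
coupling term plus `K̄¹²ⱼᵢ Λ̌ⱼ K̄¹²ⱼᵢᵀ`. If the `Λ̌ⱼ` are positive semidefinite the latter terms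
are too, which gives the inequality.
-/

namespace Matrix

variable {R : Type*} [CommSemiring R] {l m n α β : Type*}

theorem submatrix_finset_sum {ι : Type*} (s : Finset ι) (M : ι → Matrix m n R)
    (r : l → m) (c : α → n) :
    (∑ i ∈ s, M i).submatrix r c = ∑ i ∈ s, (M i).submatrix r c := by
  ext; simp only [submatrix_apply, sum_apply]

theorem submatrix_mul_diagonal_self [Fintype n] [DecidableEq n] [Fintype α] [DecidableEq α]
    (A : Matrix n n R) (d : n → R) (f : α → n) :
    (A * diagonal d).submatrix f f = A.submatrix f f * diagonal (d ∘ f) := by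
  ext; simp [mul_diagonal]

theorem submatrix_diagonal_mul_transpose_self [Fintype n] [DecidableEq n] [Fintype α]
    [DecidableEq α] (A : Matrix n n R) (d : n → R) (f : α → n) :
    (diagonal d * Aᵀ).submatrix f f = diagonal (d ∘ f) * (A.submatrix f f)ᵀ := by
  ext; simp [diagonal_mul]

theorem submatrix_mul_transpose_self [Fintype m] (M N : Matrix n m R) (f : α → n) :
    (M * Nᵀ).submatrix f f = M.submatrix f id * (N.submatrix f id)ᵀ := by
  rw [submatrix_mul M Nᵀ f id f bijective_id, transpose_submatrix]

theorem submatrix_mul_mul_transpose_self [Fintype l] [Fintype m] (M : Matrix n l R)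
    (D : Matrix l m R) (N : Matrix n m R) (f : α → n) :
    (M * D * Nᵀ).submatrix f f = M.submatrix f id * D * (N.submatrix f id)ᵀ := by
  rw [submatrix_mul_transpose_self, submatrix_mul M D f id id bijective_id, submatrix_id_id]

theorem mul_diagonal_mul_transpose_eq_add [Fintype n] [DecidableEq n] [Fintype α] [DecidableEq α]
    [Fintype β] [DecidableEq β]
    (M : Matrix m n R) (d : n → R) {f : α → n} {g : β → n} (hfg : Bijective (Sum.elim f g)) :
    M * diagonal d * Mᵀ =
      M.submatrix id f * diagonal (d ∘ f) * (M.submatrix id f)ᵀ +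
        M.submatrix id g * diagonal (d ∘ g) * (M.submatrix id g)ᵀ := by
  ext x y
  simp only [add_apply, mul_apply, transpose_apply, submatrix_apply, id, diagonal_apply, mul_ite,
    mul_zero, Finset.sum_ite_eq', Finset.mem_univ, if_true]
  rw [← Fintype.sum_bijective _ hfg (fun k => M x (Sum.elim f g k) * d (Sum.elim f g k) *
    M y (Sum.elim f g k)) _ fun _ => rfl, Fintype.sum_sum_type]
  rfl

theorem PosSemidef.mul_mul_transpose_same {R : Type*} [CommRing R] [PartialOrder R]
    [StarRing R] [TrivialStar R] [Fintype n] [Finite m] {A : Matrix n n R} (hA : A.PosSemidef)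
    (B : Matrix m n R) : (B * A * Bᵀ).PosSemidef := by
  simpa only [conjTranspose_eq_transpose_of_trivial] using hA.mul_mul_conjTranspose_same B

end Matrix

theorem Fin.bijective_sum_elim_castLE_natAdd {r n : ℕ} (h : r ≤ n) :
    Bijective (Sum.elim (Fin.castLE h)
      (fun k : Fin (n - r) => Fin.cast (Nat.add_sub_cancel' h) (Fin.natAdd r k))) := by
  convert (finCongr (Nat.add_sub_cancel' h)).bijective.comp finSumFinEquiv.bijective using 1
  ext (k | k) <;> rfl

section CoupledLyapunov

variable {ι : Type*} [Fintype ι] [DecidableEq ι] {n p q : ι → Type*}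
  [∀ i, Fintype (n i)] [∀ i, DecidableEq (n i)] [∀ i, Fintype (p i)] [∀ i, DecidableEq (p i)]
  [∀ i, Fintype (q i)] [∀ i, DecidableEq (q i)] {m : Type*} [Fintype m] {R : Type*} [CommRing R]

theorem coupledLyapunov_submatrix_eq_zero (A : ∀ i, Matrix (n i) (n i) R)
    (B : ∀ i, Matrix (n i) m R) (K : ∀ j i, Matrix (n i) (n j) R) (d : ∀ i, n i → R)
    (f : ∀ i, p i → n i) (g : ∀ i, q i → n i) (hfg : ∀ i, Bijective (Sum.elim (f i) (g i)))
    (hLyap : ∀ i, A i * diagonal (d i) + diagonal (d i) * (A i)ᵀ +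
      (∑ j ∈ Finset.univ.erase i, K j i * diagonal (d j) * (K j i)ᵀ) + B i * (B i)ᵀ = 0)
    (i : ι) :
    (A i).submatrix (f i) (f i) * diagonal (d i ∘ f i) +
        diagonal (d i ∘ f i) * ((A i).submatrix (f i) (f i))ᵀ +
      (∑ j ∈ Finset.univ.erase i, (K j i).submatrix (f i) (f j) * diagonal (d j ∘ f j) *
        ((K j i).submatrix (f i) (f j))ᵀ) +
      (∑ j ∈ Finset.univ.erase i, (K j i).submatrix (f i) (g j) * diagonal (d j ∘ g j) *
        ((K j i).submatrix (f i) (g j))ᵀ) +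
      (B i).submatrix (f i) id * ((B i).submatrix (f i) id)ᵀ = 0 := by
  have hsplit : ∀ j, K j i * diagonal (d j) * (K j i)ᵀ =
      (K j i).submatrix id (f j) * diagonal (d j ∘ f j) * ((K j i).submatrix id (f j))ᵀ +
        (K j i).submatrix id (g j) * diagonal (d j ∘ g j) * ((K j i).submatrix id (g j))ᵀ :=
    fun j => mul_diagonal_mul_transpose_eq_add _ _ (hfg j)
  have h := congrArg (fun M => M.submatrix (f i) (f i)) (hLyap i)
  simp only [hsplit, Finset.sum_add_distrib] at h
  simp only [submatrix_add, Pi.add_apply, submatrix_finset_sum, submatrix_zero, Pi.zero_apply,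
    submatrix_mul_diagonal_self, submatrix_diagonal_mul_transpose_self,
    submatrix_mul_mul_transpose_self, submatrix_submatrix, comp_id, id_comp] at h
  rwa [submatrix_mul_transpose_self, ← add_assoc] at h

theorem coupledLyapunov_submatrix_posSemidef [PartialOrder R] [AddLeftMono R] [StarRing R]
    [TrivialStar R] (A : ∀ i, Matrix (n i) (n i) R) (B : ∀ i, Matrix (n i) m R)
    (K : ∀ j i, Matrix (n i) (n j) R) (d : ∀ i, n i → R) (f : ∀ i, p i → n i) (g : ∀ i, q i → n i)
    (hfg : ∀ i, Bijective (Sum.elim (f i) (g i)))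
    (hLyap : ∀ i, A i * diagonal (d i) + diagonal (d i) * (A i)ᵀ +
      (∑ j ∈ Finset.univ.erase i, K j i * diagonal (d j) * (K j i)ᵀ) + B i * (B i)ᵀ = 0)
    (htail : ∀ j, (diagonal (d j ∘ g j)).PosSemidef) (i : ι) :
    (-((A i).submatrix (f i) (f i) * diagonal (d i ∘ f i) +
        diagonal (d i ∘ f i) * ((A i).submatrix (f i) (f i))ᵀ +
      (∑ j ∈ Finset.univ.erase i, (K j i).submatrix (f i) (f j) * diagonal (d j ∘ f j) *
        ((K j i).submatrix (f i) (f j))ᵀ) +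
      (B i).submatrix (f i) id * ((B i).submatrix (f i) id)ᵀ)).PosSemidef := by
  have h := coupledLyapunov_submatrix_eq_zero A B K d f g hfg hLyap i
  rw [neg_eq_of_add_eq_zero_left (a := ∑ j ∈ Finset.univ.erase i, (K j i).submatrix (f i) (g j) *
    diagonal (d j ∘ g j) * ((K j i).submatrix (f i) (g j))ᵀ) (by rw [← h]; abel)]
  exact posSemidef_sum _ fun j _ => (htail j).mul_mul_transpose_same _

end CoupledLyapunov

theorem stmt_17_general {D m : ℕ} (n : Fin D → ℕ)
    (A : (i : Fin D) → Matrix (Fin (n i)) (Fin (n i)) ℝ)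
    (B : (i : Fin D) → Matrix (Fin (n i)) (Fin m) ℝ)
    (K : (j i : Fin D) → Matrix (Fin (n i)) (Fin (n j)) ℝ)
    (d : (i : Fin D) → Fin (n i) → ℝ)
    (hLyap : ∀ i, A i * Matrix.diagonal (d i) + Matrix.diagonal (d i) * (A i)ᵀ +
        (∑ j ∈ Finset.univ.erase i, K j i * Matrix.diagonal (d j) * (K j i)ᵀ) +
        B i * (B i)ᵀ = 0)
    (r : Fin D → ℕ) (hr : ∀ i, r i ≤ n i) :
    (∀ i,
      (A i).submatrix (Fin.castLE (hr i)) (Fin.castLE (hr i)) *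
          Matrix.diagonal (fun k : Fin (r i) => d i (Fin.castLE (hr i) k)) +
        Matrix.diagonal (fun k : Fin (r i) => d i (Fin.castLE (hr i) k)) *
          ((A i).submatrix (Fin.castLE (hr i)) (Fin.castLE (hr i)))ᵀ +
        (∑ j ∈ Finset.univ.erase i,
          (K j i).submatrix (Fin.castLE (hr i)) (Fin.castLE (hr j)) *
            Matrix.diagonal (fun k : Fin (r j) => d j (Fin.castLE (hr j) k)) *
            ((K j i).submatrix (Fin.castLE (hr i)) (Fin.castLE (hr j)))ᵀ) +
        (∑ j ∈ Finset.univ.erase i,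
          (K j i).submatrix (Fin.castLE (hr i))
              (fun k : Fin (n j - r j) =>
                Fin.cast (Nat.add_sub_cancel' (hr j)) (Fin.natAdd (r j) k)) *
            Matrix.diagonal (fun k : Fin (n j - r j) =>
              d j (Fin.cast (Nat.add_sub_cancel' (hr j)) (Fin.natAdd (r j) k))) *
            ((K j i).submatrix (Fin.castLE (hr i))
              (fun k : Fin (n j - r j) =>
                Fin.cast (Nat.add_sub_cancel' (hr j)) (Fin.natAdd (r j) k)))ᵀ) +
        (B i).submatrix (Fin.castLE (hr i)) id *
          ((B i).submatrix (Fin.castLE (hr i)) id)ᵀ = 0) ∧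
    ((∀ j, (Matrix.diagonal (fun k : Fin (n j - r j) =>
        d j (Fin.cast (Nat.add_sub_cancel' (hr j)) (Fin.natAdd (r j) k)))).PosSemidef) →
      ∀ i,
        (-((A i).submatrix (Fin.castLE (hr i)) (Fin.castLE (hr i)) *
            Matrix.diagonal (fun k : Fin (r i) => d i (Fin.castLE (hr i) k)) +
          Matrix.diagonal (fun k : Fin (r i) => d i (Fin.castLE (hr i) k)) *
            ((A i).submatrix (Fin.castLE (hr i)) (Fin.castLE (hr i)))ᵀ +
          (∑ j ∈ Finset.univ.erase i,
            (K j i).submatrix (Fin.castLE (hr i)) (Fin.castLE (hr j)) *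
              Matrix.diagonal (fun k : Fin (r j) => d j (Fin.castLE (hr j) k)) *
              ((K j i).submatrix (Fin.castLE (hr i)) (Fin.castLE (hr j)))ᵀ) +
          (B i).submatrix (Fin.castLE (hr i)) id *
            ((B i).submatrix (Fin.castLE (hr i)) id)ᵀ)).PosSemidef) := by
  have hsplit := fun i => Fin.bijective_sum_elim_castLE_natAdd (hr i)
  exact ⟨coupledLyapunov_submatrix_eq_zero A B K d _ _ hsplit hLyap,
    coupledLyapunov_submatrix_posSemidef A B K d _ _ hsplit hLyap⟩

/-- truncation of the balanced coupled generalized Lyapunov equations.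
If the balanced equations `Ā_i Λ_i + Λ_i Ā_iᵀ + Σ_{j≠i} K̄_{j,i} Λ_j K̄_{j,i}ᵀ + B̄_i B̄_iᵀ = 0`
hold with `Λ_i = diagonal (d i)`, then after partitioning into leading `r_i` blocks and
tails, the truncated blocks satisfy
`Â_i Λ̂_i + Λ̂_i Â_iᵀ + Σ_{j≠i} K̂_{j,i} Λ̂_j K̂_{j,i}ᵀ + Σ_{j≠i} K̄^{12}_{j,i} Λ̌_j (K̄^{12}_{j,i})ᵀ + B̂_i B̂_iᵀ = 0`,
and if each `Λ̌_j` is positive semidefinite then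
`Â_i Λ̂_i + Λ̂_i Â_iᵀ + Σ_{j≠i} K̂_{j,i} Λ̂_j K̂_{j,i}ᵀ + B̂_i B̂_iᵀ ⪯ 0`. -/
theorem stmt_17 {D m : ℕ} (hD : 2 ≤ D) (n : Fin D → ℕ)
    (A : (i : Fin D) → Matrix (Fin (n i)) (Fin (n i)) ℝ)
    (B : (i : Fin D) → Matrix (Fin (n i)) (Fin m) ℝ)
    (K : (j i : Fin D) → Matrix (Fin (n i)) (Fin (n j)) ℝ)
    (d : (i : Fin D) → Fin (n i) → ℝ)
    (hLyap : ∀ i, A i * Matrix.diagonal (d i) + Matrix.diagonal (d i) * (A i)ᵀ +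
        (∑ j ∈ Finset.univ.erase i, K j i * Matrix.diagonal (d j) * (K j i)ᵀ) +
        B i * (B i)ᵀ = 0)
    (r : Fin D → ℕ) (hr : ∀ i, r i ≤ n i) :
    (∀ i,
      (A i).submatrix (Fin.castLE (hr i)) (Fin.castLE (hr i)) *
          Matrix.diagonal (fun k : Fin (r i) => d i (Fin.castLE (hr i) k)) +
        Matrix.diagonal (fun k : Fin (r i) => d i (Fin.castLE (hr i) k)) *
          ((A i).submatrix (Fin.castLE (hr i)) (Fin.castLE (hr i)))ᵀ +
        (∑ j ∈ Finset.univ.erase i,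
          (K j i).submatrix (Fin.castLE (hr i)) (Fin.castLE (hr j)) *
            Matrix.diagonal (fun k : Fin (r j) => d j (Fin.castLE (hr j) k)) *
            ((K j i).submatrix (Fin.castLE (hr i)) (Fin.castLE (hr j)))ᵀ) +
        (∑ j ∈ Finset.univ.erase i,
          (K j i).submatrix (Fin.castLE (hr i))
              (fun k : Fin (n j - r j) =>
                Fin.cast (Nat.add_sub_cancel' (hr j)) (Fin.natAdd (r j) k)) *
            Matrix.diagonal (fun k : Fin (n j - r j) =>
              d j (Fin.cast (Nat.add_sub_cancel' (hr j)) (Fin.natAdd (r j) k))) *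
            ((K j i).submatrix (Fin.castLE (hr i))
              (fun k : Fin (n j - r j) =>
                Fin.cast (Nat.add_sub_cancel' (hr j)) (Fin.natAdd (r j) k)))ᵀ) +
        (B i).submatrix (Fin.castLE (hr i)) id *
          ((B i).submatrix (Fin.castLE (hr i)) id)ᵀ = 0) ∧
    ((∀ j, (Matrix.diagonal (fun k : Fin (n j - r j) =>
        d j (Fin.cast (Nat.add_sub_cancel' (hr j)) (Fin.natAdd (r j) k)))).PosSemidef) →
      ∀ i,
        (-((A i).submatrix (Fin.castLE (hr i)) (Fin.castLE (hr i)) *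
            Matrix.diagonal (fun k : Fin (r i) => d i (Fin.castLE (hr i) k)) +
          Matrix.diagonal (fun k : Fin (r i) => d i (Fin.castLE (hr i) k)) *
            ((A i).submatrix (Fin.castLE (hr i)) (Fin.castLE (hr i)))ᵀ +
          (∑ j ∈ Finset.univ.erase i,
            (K j i).submatrix (Fin.castLE (hr i)) (Fin.castLE (hr j)) *
              Matrix.diagonal (fun k : Fin (r j) => d j (Fin.castLE (hr j) k)) *
              ((K j i).submatrix (Fin.castLE (hr i)) (Fin.castLE (hr j)))ᵀ) +
          (B i).submatrix (Fin.castLE (hr i)) id *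
            ((B i).submatrix (Fin.castLE (hr i)) id)ᵀ)).PosSemidef) :=
  stmt_17_general n A B K d hLyap r hr
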